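/- arXiv:2301.09969 — 6 statements merged into one kernel-verified Lean document; each statement's English description precedes it below -/
import Mathlib

section
/- Let v₁, …, vₙ ∈ ℝ² be the oriented edge vectors vᵢ = (xᵢ, zᵢ) of a closed planar polyline in the XZ-plane, with zᵢ ≠ 0 for every i. Assume: (a) ∑ᵢ xᵢ = 0 (closure in the x-direction); (b) for every real number c, the sum of the oriented lengths sign(zᵢ)·‖vᵢ‖ over the class {i : |zᵢ|/‖vᵢ‖ = c} equals zero. Then for every t ∈ [−1, 1] the deformed edge vectors wᵢ(t) = (t·xᵢ, sign(zᵢ)·√((1−t²)·xᵢ² + zᵢ²)) also sum to zero, i.e., the cross-sectional polyline remains closed throughout the whole isometric deformation of T-type (note wᵢ(1) = vᵢ). -/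
/-!
Write `rᵢ = ‖vᵢ‖` and `cᵢ = |zᵢ| / rᵢ`. The deformed edge has vertical component
`sign(zᵢ) · √(rᵢ² − t² xᵢ²) = √(1 − t² (1 − cᵢ²)) · sign(zᵢ) rᵢ`, so the deformation multiplies
every oriented length by a factor that depends only on the class `cᵢ`. Grouping the vertical sum
by classes, each class contributes that factor times its (vanishing) total oriented length.
-/

open Finset

theorem sum_comp_mul_eq_zero_of_fiberwise_sum_eq_zero {ι κ R : Type*} [Fintype ι]
    [DecidableEq κ] [CommSemiring R] (g : ι → κ) (w : ι → R) (φ : κ → R)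
    (h : ∀ c, ∑ i ∈ univ.filter (fun i => g i = c), w i = 0) :
    ∑ i, φ (g i) * w i = 0 := by
  rw [← sum_fiberwise_of_maps_to (fun i _ => mem_image_of_mem g (mem_univ i))]
  refine sum_eq_zero fun c _ => ?_
  calc ∑ i ∈ univ.filter (fun i => g i = c), φ (g i) * w i
      = ∑ i ∈ univ.filter (fun i => g i = c), φ c * w i :=
        sum_congr rfl fun i hi => by rw [(mem_filter.mp hi).2]
    _ = 0 := by rw [← mul_sum, h c, mul_zero]

noncomputable def sinInclination (x z : ℝ) : ℝ := |z| / √(x ^ 2 + z ^ 2)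

theorem sqrt_deformed_length (x z t : ℝ) :
    √((1 - t ^ 2) * x ^ 2 + z ^ 2)
      = √(1 - t ^ 2 * (1 - sinInclination x z ^ 2)) * √(x ^ 2 + z ^ 2) := by
  rw [← Real.sqrt_mul' _ (by positivity), sinInclination, div_pow, sq_abs,
    Real.sq_sqrt (by positivity)]
  congr 1
  rcases eq_or_ne (x ^ 2 + z ^ 2) 0 with h | h
  · obtain ⟨rfl, rfl⟩ : x = 0 ∧ z = 0 := by
      constructor <;> nlinarith [sq_nonneg x, sq_nonneg z]
    simp
  · field_simp
    ring

open Classical in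
theorem closed_discrete_profile_general (n : ℕ) (x z : Fin n → ℝ)
    (hx : ∑ i, x i = 0)
    (hclass : ∀ c : ℝ,
      ∑ i ∈ Finset.univ.filter
          (fun i => |z i| / Real.sqrt (x i ^ 2 + z i ^ 2) = c),
        Real.sign (z i) * Real.sqrt (x i ^ 2 + z i ^ 2) = 0) :
    ∀ t ∈ Set.Icc (-1 : ℝ) 1,
      (∑ i, t * x i = 0) ∧
      (∑ i, Real.sign (z i) *
          Real.sqrt ((1 - t ^ 2) * x i ^ 2 + z i ^ 2) = 0) := by
  intro t _
  refine ⟨by rw [← mul_sum, hx, mul_zero], ?_⟩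
  simp_rw [sqrt_deformed_length, mul_left_comm (Real.sign _)]
  exact sum_comp_mul_eq_zero_of_fiberwise_sum_eq_zero (fun i => sinInclination (x i) (z i)) _
    (fun c => √(1 - t ^ 2 * (1 - c ^ 2))) hclass

open Classical in
/-- Theorem 1 (closed-discrete-profile): a closed cross-sectional polyline whose
edge vectors satisfy the class-wise oriented-length conditions remains closed
under the whole isometric deformation of T-type. -/
theorem closed_discrete_profile (n : ℕ) (x z : Fin n → ℝ)
    (hz : ∀ i, z i ≠ 0)
    (hx : ∑ i, x i = 0)
    (hclass : ∀ c : ℝ,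
      ∑ i ∈ Finset.univ.filter
          (fun i => |z i| / Real.sqrt (x i ^ 2 + z i ^ 2) = c),
        Real.sign (z i) * Real.sqrt (x i ^ 2 + z i ^ 2) = 0) :
    ∀ t ∈ Set.Icc (-1 : ℝ) 1,
      (∑ i, t * x i = 0) ∧
      (∑ i, Real.sign (z i) *
          Real.sqrt ((1 - t ^ 2) * x i ^ 2 + z i ^ 2) = 0) :=
  closed_discrete_profile_general n x z hx hclass
end

section
/- Let m, n be natural numbers. For each class j = 1, …, m let F_j, G_j : [0, k_j] → ℝ be continuously differentiable with F_j'(s)² + G_j'(s)² = 1 for all s. Let a closed cross-section consist of n curve segments, where segment i belongs to class γ(i) ∈ {1, …, m} and its derivative data is f_i' = μ_i·F_{γ(i)}' and g_i' = ν_i·G_{γ(i)}' for signs μ_i, ν_i ∈ {−1, +1} (encoding that curve segments of one class are related by one of: identity, reflection in the X-axis, reflection in the Z-axis, or 180° rotation). Assume: (a) ∑ᵢ μ_i·(F_{γ(i)}(k_{γ(i)}) − F_{γ(i)}(0)) = 0 (closure in the x-direction); (b) for each class j, ∑_{i : γ(i) = j} ν_i = 0. Then for every t ∈ [−1, 1]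 the deformed cross-section remains closed: ∑ᵢ t·μ_i·(F_{γ(i)}(k_{γ(i)}) − F_{γ(i)}(0)) = 0 and ∑ᵢ ν_i·∫₀^{k_{γ(i)}} √((1−t²)·F_{γ(i)}'(s)² + G_{γ(i)}'(s)²) ds = 0. -/
/-- Theorem 3 (thm:general): a closed smooth cross-section, built from unit-speed
curve segments that are classwise related by identity / reflections / 180°
rotation, remains closed under the whole isometric deformation of T-type,
provided the signed counts in each class cancel. -/
theorem smooth_cross_section_remains_closed (m n : ℕ)
    (k : Fin m → ℝ) (hk : ∀ j, 0 < k j)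
    (F G F' G' : Fin m → ℝ → ℝ)
    (hF : ∀ j, ∀ s ∈ Set.Icc (0 : ℝ) (k j),
      HasDerivWithinAt (F j) (F' j s) (Set.Icc 0 (k j)) s)
    (hG : ∀ j, ∀ s ∈ Set.Icc (0 : ℝ) (k j),
      HasDerivWithinAt (G j) (G' j s) (Set.Icc 0 (k j)) s)
    (hF' : ∀ j, ContinuousOn (F' j) (Set.Icc 0 (k j)))
    (hG' : ∀ j, ContinuousOn (G' j) (Set.Icc 0 (k j)))
    (hunit : ∀ j, ∀ s ∈ Set.Icc (0 : ℝ) (k j), F' j s ^ 2 + G' j s ^ 2 = 1)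
    (γ : Fin n → Fin m) (μ ν : Fin n → ℝ)
    (hμ : ∀ i, μ i = 1 ∨ μ i = -1) (hν : ∀ i, ν i = 1 ∨ ν i = -1)
    (ha : ∑ i, μ i * (F (γ i) (k (γ i)) - F (γ i) 0) = 0)
    (hb : ∀ j, ∑ i ∈ Finset.univ.filter (fun i => γ i = j), ν i = 0) :
    ∀ t ∈ Set.Icc (-1 : ℝ) 1,
      (∑ i, t * μ i * (F (γ i) (k (γ i)) - F (γ i) 0) = 0) ∧
      (∑ i, ν i * ∫ s in (0 : ℝ)..(k (γ i)),
          Real.sqrt ((1 - t ^ 2) * F' (γ i) s ^ 2 + G' (γ i) s ^ 2) = 0) := by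
  intro t ht
  constructor
  · calc ∑ i, t * μ i * (F (γ i) (k (γ i)) - F (γ i) 0)
        = t * ∑ i, μ i * (F (γ i) (k (γ i)) - F (γ i) 0) := by
          rw [Finset.mul_sum]; congr 1; ext i; ring
      _ = 0 := by rw [ha, mul_zero]
  · set c : Fin m → ℝ := fun j => ∫ s in (0:ℝ)..(k j),
      Real.sqrt ((1 - t ^ 2) * F' j s ^ 2 + G' j s ^ 2) with hc
    have : ∑ i, ν i * c (γ i)
        = ∑ j, ∑ i ∈ Finset.univ.filter (fun i => γ i = j), ν i * c (γ i) := by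
      rw [Finset.sum_fiberwise]
    rw [this]
    apply Finset.sum_eq_zero
    intro j _
    have : ∑ i ∈ Finset.univ.filter (fun i => γ i = j), ν i * c (γ i)
        = (∑ i ∈ Finset.univ.filter (fun i => γ i = j), ν i) * c j := by
      rw [Finset.sum_mul]
      apply Finset.sum_congr rfl
      intro i hi
      rw [Finset.mem_filter] at hi
      rw [hi.2]
    rw [this, hb, zero_mul]
end

section
/- Let k > 0 and for i = 1, 2 let f_i, g_i : [0, k] → ℝ be continuously differentiable with f_i'(s)² + g_i'(s)² = 1 for all s ∈ [0, k], f_i(0) = g_i(0) = 0, g_i'(s) ≠ 0 for all s ∈ [0, k] (no horizontal tangents), and f_i'(s) ≠ 0 for all s ∈ (0, k) (vertical tangents only possible at the endpoints). If for every t ∈ [0, 1] and every s ∈ [0, k] one has (1−t²)·f₁'(s)² + g₁'(s)² = (1−t²)·f₂'(s)² + g₂'(s)², then there exist signs ε, δ ∈ {−1, +1} such that f₂(s) = ε·f₁(s) and g₂(s) = δ·g₁(s) for all s ∈ [0, k]; i.e., the second curve is obtained from the first by the identity, the reflection in the X-axis, the reflection in the Z-axis, or a 180° rotation. -/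
/-!
Taking `t = 1` in the hypothesis gives `g₂'² = g₁'²`, and then unit speed gives `f₂'² = f₁'²`.
A continuous function whose square equals that of a continuous function without zeros on a
connected set is `±` that function there; the zeros of `f₁'`, `g₁'` can only sit at the endpoints,
so `f₂' = ε f₁'` and `g₂' = δ g₁'` on `(0, k)`, hence on `[0, k]` by continuity. Integrating from
the common starting point `0` gives `f₂ = ε f₁` and `g₂ = δ g₁`.
-/

open Set

theorem eqOn_or_eqOn_neg_of_sq_eq_of_ne_zero_on_Ioo {a b : ℝ} (hab : a < b) {u v : ℝ → ℝ}
    (hu : ContinuousOn u (Icc a b)) (hv : ContinuousOn v (Icc a b))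
    (hsq : ∀ x ∈ Icc a b, v x ^ 2 = u x ^ 2) (hu_ne : ∀ x ∈ Ioo a b, u x ≠ 0) :
    EqOn v u (Icc a b) ∨ EqOn v (-u) (Icc a b) := by
  have hsub : Ioo a b ⊆ Icc a b := Ioo_subset_Icc_self
  have hcl : Icc a b ⊆ closure (Ioo a b) := (closure_Ioo hab.ne).symm.subset
  rcases isPreconnected_Ioo.eq_or_eq_neg_of_sq_eq (hv.mono hsub) (hu.mono hsub)
    (fun x hx => hsq x (hsub hx)) (hu_ne _) with h | h
  · exact .inl (h.of_subset_closure hv hu hsub hcl)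
  · exact .inr (h.of_subset_closure hv hu.neg hsub hcl)

theorem eqOn_const_mul_of_hasDerivWithinAt {a b c : ℝ} {F G F' G' : ℝ → ℝ}
    (hF : ∀ x ∈ Icc a b, HasDerivWithinAt F (F' x) (Icc a b) x)
    (hG : ∀ x ∈ Icc a b, HasDerivWithinAt G (G' x) (Icc a b) x)
    (hderiv : ∀ x ∈ Ico a b, F' x = c * G' x) (ha : F a = c * G a) :
    ∀ x ∈ Icc a b, F x = c * G x := by
  refine eq_of_has_deriv_right_eq (f' := F') (fun x hx => ?_) (fun x hx => ?_)
    (fun x hx => (hF x hx).continuousWithinAt)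
    (fun x hx => ((hG x hx).const_mul c).continuousWithinAt) ha
  · exact (hF x (Ico_subset_Icc_self hx)).mono_of_mem_nhdsWithin (Icc_mem_nhdsGE_of_mem hx)
  · rw [hderiv x hx]
    exact ((hG x (Ico_subset_Icc_self hx)).const_mul c).mono_of_mem_nhdsWithin
      (Icc_mem_nhdsGE_of_mem hx)

theorem exists_sign_eq_mul_of_deriv_sq_eq {a b : ℝ} (hab : a < b) {F G F' G' : ℝ → ℝ}
    (hF : ∀ x ∈ Icc a b, HasDerivWithinAt F (F' x) (Icc a b) x)
    (hG : ∀ x ∈ Icc a b, HasDerivWithinAt G (G' x) (Icc a b) x)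
    (hF' : ContinuousOn F' (Icc a b)) (hG' : ContinuousOn G' (Icc a b))
    (hsq : ∀ x ∈ Icc a b, F' x ^ 2 = G' x ^ 2) (hG'_ne : ∀ x ∈ Ioo a b, G' x ≠ 0)
    (hFa : F a = 0) (hGa : G a = 0) :
    ∃ ε : ℝ, (ε = 1 ∨ ε = -1) ∧ ∀ x ∈ Icc a b, F x = ε * G x := by
  have hεa : ∀ ε : ℝ, F a = ε * G a := by simp [hFa, hGa]
  rcases eqOn_or_eqOn_neg_of_sq_eq_of_ne_zero_on_Ioo hab hG' hF' hsq hG'_ne with h | h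
  · refine ⟨1, .inl rfl, eqOn_const_mul_of_hasDerivWithinAt hF hG (fun x hx => ?_) (hεa 1)⟩
    simpa using h (Ico_subset_Icc_self hx)
  · refine ⟨-1, .inr rfl, eqOn_const_mul_of_hasDerivWithinAt hF hG (fun x hx => ?_) (hεa (-1))⟩
    simpa using h (Ico_subset_Icc_self hx)

theorem two_segment_cross_section_general (k : ℝ) (hk : 0 < k)
    (f₁ g₁ f₂ g₂ f₁' g₁' f₂' g₂' : ℝ → ℝ)
    (hf₁ : ∀ s ∈ Set.Icc (0 : ℝ) k, HasDerivWithinAt f₁ (f₁' s) (Set.Icc 0 k) s)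
    (hg₁ : ∀ s ∈ Set.Icc (0 : ℝ) k, HasDerivWithinAt g₁ (g₁' s) (Set.Icc 0 k) s)
    (hf₂ : ∀ s ∈ Set.Icc (0 : ℝ) k, HasDerivWithinAt f₂ (f₂' s) (Set.Icc 0 k) s)
    (hg₂ : ∀ s ∈ Set.Icc (0 : ℝ) k, HasDerivWithinAt g₂ (g₂' s) (Set.Icc 0 k) s)
    (hf₁c : ContinuousOn f₁' (Set.Icc 0 k)) (hg₁c : ContinuousOn g₁' (Set.Icc 0 k))
    (hf₂c : ContinuousOn f₂' (Set.Icc 0 k)) (hg₂c : ContinuousOn g₂' (Set.Icc 0 k))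
    (hunit₁ : ∀ s ∈ Set.Icc (0 : ℝ) k, f₁' s ^ 2 + g₁' s ^ 2 = 1)
    (hunit₂ : ∀ s ∈ Set.Icc (0 : ℝ) k, f₂' s ^ 2 + g₂' s ^ 2 = 1)
    (hstart₁ : f₁ 0 = 0 ∧ g₁ 0 = 0) (hstart₂ : f₂ 0 = 0 ∧ g₂ 0 = 0)
    (hhoriz₁ : ∀ s ∈ Set.Icc (0 : ℝ) k, g₁' s ≠ 0)
    (hvert₁ : ∀ s ∈ Set.Ioo (0 : ℝ) k, f₁' s ≠ 0)
    (heq : ∀ t ∈ Set.Icc (0 : ℝ) 1, ∀ s ∈ Set.Icc (0 : ℝ) k,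
      (1 - t ^ 2) * f₁' s ^ 2 + g₁' s ^ 2 = (1 - t ^ 2) * f₂' s ^ 2 + g₂' s ^ 2) :
    ∃ ε δ : ℝ, (ε = 1 ∨ ε = -1) ∧ (δ = 1 ∨ δ = -1) ∧
      ∀ s ∈ Set.Icc (0 : ℝ) k, f₂ s = ε * f₁ s ∧ g₂ s = δ * g₁ s := by
  have hg_sq : ∀ s ∈ Icc 0 k, g₂' s ^ 2 = g₁' s ^ 2 := fun s hs => by
    simpa using (heq 1 (by norm_num) s hs).symm
  have hf_sq : ∀ s ∈ Icc 0 k, f₂' s ^ 2 = f₁' s ^ 2 := fun s hs => by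
    linarith [hunit₁ s hs, hunit₂ s hs, hg_sq s hs]
  obtain ⟨ε, hε, hf⟩ := exists_sign_eq_mul_of_deriv_sq_eq hk hf₂ hf₁ hf₂c hf₁c hf_sq hvert₁
    hstart₂.1 hstart₁.1
  obtain ⟨δ, hδ, hg⟩ := exists_sign_eq_mul_of_deriv_sq_eq hk hg₂ hg₁ hg₂c hg₁c hg_sq
    (fun s hs => hhoriz₁ s (Ioo_subset_Icc_self hs)) hstart₂.2 hstart₁.2
  exact ⟨ε, δ, hε, hδ, fun s hs => ⟨hf s hs, hg s hs⟩⟩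

/-- Lemma 1 (lem:twoangle): if two unit-speed curve segments (with no horizontal
tangents, and vertical tangents only at the endpoints) have equal T-deformed
speeds for every deformation parameter `t ∈ [0,1]`, then the second segment is
obtained from the first by the identity, the reflection in the X-axis, the
reflection in the Z-axis, or a 180° rotation. -/
theorem two_segment_cross_section (k : ℝ) (hk : 0 < k)
    (f₁ g₁ f₂ g₂ f₁' g₁' f₂' g₂' : ℝ → ℝ)
    (hf₁ : ∀ s ∈ Set.Icc (0 : ℝ) k, HasDerivWithinAt f₁ (f₁' s) (Set.Icc 0 k) s)
    (hg₁ : ∀ s ∈ Set.Icc (0 : ℝ) k, HasDerivWithinAt g₁ (g₁' s) (Set.Icc 0 k) s)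
    (hf₂ : ∀ s ∈ Set.Icc (0 : ℝ) k, HasDerivWithinAt f₂ (f₂' s) (Set.Icc 0 k) s)
    (hg₂ : ∀ s ∈ Set.Icc (0 : ℝ) k, HasDerivWithinAt g₂ (g₂' s) (Set.Icc 0 k) s)
    (hf₁c : ContinuousOn f₁' (Set.Icc 0 k)) (hg₁c : ContinuousOn g₁' (Set.Icc 0 k))
    (hf₂c : ContinuousOn f₂' (Set.Icc 0 k)) (hg₂c : ContinuousOn g₂' (Set.Icc 0 k))
    (hunit₁ : ∀ s ∈ Set.Icc (0 : ℝ) k, f₁' s ^ 2 + g₁' s ^ 2 = 1)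
    (hunit₂ : ∀ s ∈ Set.Icc (0 : ℝ) k, f₂' s ^ 2 + g₂' s ^ 2 = 1)
    (hstart₁ : f₁ 0 = 0 ∧ g₁ 0 = 0) (hstart₂ : f₂ 0 = 0 ∧ g₂ 0 = 0)
    (hhoriz₁ : ∀ s ∈ Set.Icc (0 : ℝ) k, g₁' s ≠ 0)
    (hhoriz₂ : ∀ s ∈ Set.Icc (0 : ℝ) k, g₂' s ≠ 0)
    (hvert₁ : ∀ s ∈ Set.Ioo (0 : ℝ) k, f₁' s ≠ 0)
    (hvert₂ : ∀ s ∈ Set.Ioo (0 : ℝ) k, f₂' s ≠ 0)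
    (heq : ∀ t ∈ Set.Icc (0 : ℝ) 1, ∀ s ∈ Set.Icc (0 : ℝ) k,
      (1 - t ^ 2) * f₁' s ^ 2 + g₁' s ^ 2 = (1 - t ^ 2) * f₂' s ^ 2 + g₂' s ^ 2) :
    ∃ ε δ : ℝ, (ε = 1 ∨ ε = -1) ∧ (δ = 1 ∨ δ = -1) ∧
      ∀ s ∈ Set.Icc (0 : ℝ) k, f₂ s = ε * f₁ s ∧ g₂ s = δ * g₁ s :=
  two_segment_cross_section_general k hk f₁ g₁ f₂ g₂ f₁' g₁' f₂' g₂' hf₁ hg₁ hf₂ hg₂ hf₁c hg₁c hf₂c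
    hg₂c hunit₁ hunit₂ hstart₁ hstart₂ hhoriz₁ hvert₁ heq
end

section
/- Let k > 0 and let f, g : [0, k] → ℝ be twice continuously differentiable with f'(s)² + g'(s)² = 1 and g'(s) ≠ 0 for all s ∈ [0, k]. Let α ∈ ℝ with sin α ≠ 0, and define the rotated profile f̄ = cos α·f + sin α·g, ḡ = cos α·g − sin α·f. For t ∈ (0, 1) let p_t denote the T-deformed curve of (f, g) and p̄_{t̂} the T-deformed curve of (f̄, ḡ) with parameter t̂. Suppose there is a nonempty open set T ⊆ (0, 1) such that for every t ∈ T there exists t̂ ∈ (0, 1) with ‖p_t''(s)‖ = ‖p̄_{t̂}''(s)‖ for all s ∈ [0, k] (the two deformed curves have identical curvature functions, hence are congruent). Then f and g are affine functions; i.e., the profile curve s ↦ (f(s), g(s)) is a straight line segment. -/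
/-- The isometric deformation of T-type of a planar profile curve
`s ↦ (f s, g s)` with deformation parameter `t`, as a curve in the Euclidean
plane (modelled as `WithLp 2 (ℝ × ℝ)` so that `‖·‖` is the Euclidean norm). -/
noncomputable def Tdeform (f g : ℝ → ℝ) (t : ℝ) : ℝ → WithLp 2 (ℝ × ℝ) :=
  fun s => (WithLp.equiv 2 (ℝ × ℝ)).symm
    (t * f s,
      ∫ u in (0 : ℝ)..s,
        Real.sqrt ((1 - t ^ 2) * deriv f u ^ 2 + deriv g u ^ 2))

/-!
For a unit-speed profile with `f' = cos θ`, `g' = sin θ`, the T-deformation `p_t` has squared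
curvature `t² f''² / (1 - t² f'²)`. Where `f'' ≠ 0`, equality with the curvature of `p̄_u`, the
deformation of the profile rotated by `α`, becomes `ρ² + t² (f̄'² - ρ² f'²) = t² / u²` with
`ρ = ḡ' / g' = sin (θ - α) / sin θ`. Two different parameters `t` eliminate the second term, so
`ρ²` is locally constant; but `ρ' = -sin α f'' / g'³ ≠ 0`, and a function with nonvanishing
derivative has no locally constant square. Hence `f'' = 0`, then `g'' = 0` because
`f' f'' + g' g'' = 0`, and the profile is a segment.
-/

open Set Filter Topology Real

theorem eqOn_affine_of_deriv_eq {φ : ℝ → ℝ} (hφ : Differentiable ℝ φ) {a b c : ℝ}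
    (h : ∀ x ∈ Ioo a b, deriv φ x = c) : ∀ x ∈ Icc a b, φ x = c * (x - a) + φ a := by
  intro x hx
  have ha : a ∈ Icc a b := left_mem_Icc.2 (hx.1.trans hx.2)
  have h' : ∀ y ∈ interior (Icc a b), deriv φ y = c := by rwa [interior_Icc]
  have hle := (convex_Icc a b).image_sub_le_mul_sub_of_deriv_le hφ.continuous.continuousOn
    hφ.differentiableOn (fun y hy => (h' y hy).le) a ha x hx hx.1
  have hge := (convex_Icc a b).mul_sub_le_image_sub_of_le_deriv hφ.continuous.continuousOn
    hφ.differentiableOn (fun y hy => (h' y hy).ge) a ha x hx hx.1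
  linarith

theorem exists_affine_of_deriv_deriv_eq_zero {φ : ℝ → ℝ} (hφ : ContDiff ℝ 2 φ) {a b : ℝ}
    (h : ∀ x ∈ Ioo a b, deriv (deriv φ) x = 0) : ∃ c d, ∀ x ∈ Icc a b, φ x = c * x + d := by
  have hconst := eqOn_affine_of_deriv_eq hφ.differentiable_deriv_two h
  refine ⟨deriv φ a, φ a - deriv φ a * a, fun x hx => ?_⟩
  have := eqOn_affine_of_deriv_eq (hφ.differentiable two_ne_zero) (c := deriv φ a)
    (fun y hy => by simpa using hconst y (Ioo_subset_Icc_self hy)) x hx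
  linarith

theorem WithLp.hasDerivAt_toLp_prod {φ ψ : ℝ → ℝ} {φ' ψ' x : ℝ} (hφ : HasDerivAt φ φ' x)
    (hψ : HasDerivAt ψ ψ' x) :
    HasDerivAt (fun y => WithLp.toLp 2 (φ y, ψ y)) (WithLp.toLp 2 (φ', ψ')) x :=
  (WithLp.prodContinuousLinearEquiv 2 ℝ ℝ ℝ).symm.hasFDerivAt.comp_hasDerivAt x (hφ.prodMk hψ)

theorem WithLp.norm_toLp_prod_sq (a b : ℝ) : ‖WithLp.toLp 2 (a, b)‖ ^ 2 = a ^ 2 + b ^ 2 := by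
  simp [WithLp.prod_norm_sq_eq_of_L2]

theorem hasDerivAt_Tdeform {f g : ℝ → ℝ} (hf : ContDiff ℝ 1 f) (hg : ContDiff ℝ 1 g) (t x : ℝ) :
    HasDerivAt (Tdeform f g t)
      (WithLp.toLp 2 (t * deriv f x, √((1 - t ^ 2) * deriv f x ^ 2 + deriv g x ^ 2))) x := by
  have hspeed : Continuous fun u => √((1 - t ^ 2) * deriv f u ^ 2 + deriv g u ^ 2) := by
    have := hf.continuous_deriv le_rfl
    have := hg.continuous_deriv le_rfl
    fun_prop
  exact WithLp.hasDerivAt_toLp_prod ((hf.differentiable one_ne_zero x).hasDerivAt.const_mul t)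
    (intervalIntegral.integral_hasDerivAt_right (hspeed.intervalIntegrable _ _)
      hspeed.aestronglyMeasurable.stronglyMeasurableAtFilter hspeed.continuousAt)

theorem norm_deriv_deriv_Tdeform_sq {f g : ℝ → ℝ} (hf : ContDiff ℝ 2 f) (hg : ContDiff ℝ 2 g)
    {t s : ℝ} (ht : t ^ 2 < 1) (hunit : ∀ᶠ x in 𝓝 s, deriv f x ^ 2 + deriv g x ^ 2 = 1) :
    ‖deriv (deriv (Tdeform f g t)) s‖ ^ 2 =
      t ^ 2 * deriv (deriv f) s ^ 2 / (1 - t ^ 2 * deriv f s ^ 2) := by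
  set A := deriv f
  have hA : HasDerivAt A (deriv A s) s := (hf.differentiable_deriv_two s).hasDerivAt
  have hpos : 0 < 1 - t ^ 2 * A s ^ 2 := by
    nlinarith [hunit.self_of_nhds, sq_nonneg (deriv g s), sq_nonneg (A s)]
  have hvel : deriv (Tdeform f g t) =ᶠ[𝓝 s]
      fun x => WithLp.toLp 2 (t * A x, √(1 - t ^ 2 * A x ^ 2)) := by
    filter_upwards [hunit] with x hx
    rw [(hasDerivAt_Tdeform (hf.of_le one_le_two) (hg.of_le one_le_two) t x).deriv]
    congr 3
    linear_combination hx
  have hacc := WithLp.hasDerivAt_toLp_prod (hA.const_mul t)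
    (((hA.fun_pow 2).const_mul (t ^ 2)).const_sub 1 |>.sqrt hpos.ne')
  rw [hvel.deriv_eq, hacc.deriv, WithLp.norm_toLp_prod_sq]
  field_simp
  rw [Real.sq_sqrt hpos.le]
  ring

theorem mul_deriv_add_mul_deriv_eq_zero {φ ψ : ℝ → ℝ} {s c : ℝ} (hφ : DifferentiableAt ℝ φ s)
    (hψ : DifferentiableAt ℝ ψ s) (h : ∀ᶠ x in 𝓝 s, φ x ^ 2 + ψ x ^ 2 = c) :
    φ s * deriv φ s + ψ s * deriv ψ s = 0 := by
  have hsum := hφ.hasDerivAt.fun_pow 2 |>.add (hψ.hasDerivAt.fun_pow 2)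
  have := hsum.unique ((hasDerivAt_const s c).congr_of_eventuallyEq h)
  linear_combination this / 2

theorem IsOpen.eq_empty_of_sq_const_of_hasDerivAt_ne_zero {φ φ' : ℝ → ℝ} {U : Set ℝ} {q : ℝ}
    (hU : IsOpen U) (hφ : ∀ x ∈ U, HasDerivAt φ (φ' x) x) (hφ' : ∀ x ∈ U, φ' x ≠ 0)
    (hq : ∀ x ∈ U, φ x ^ 2 = q) : U = ∅ := by
  have hzero : ∀ x ∈ U, φ x = 0 := fun x hx => by
    have h := ((hφ x hx).fun_pow 2).unique
      ((hasDerivAt_const x q).congr_of_eventuallyEq (eventually_of_mem (hU.mem_nhds hx) hq))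
    simpa [hφ' x hx] using h
  refine eq_empty_of_forall_notMem fun x hx => hφ' x hx ?_
  exact (hφ x hx).unique
    ((hasDerivAt_const x 0).congr_of_eventuallyEq (eventually_of_mem (hU.mem_nhds hx) hzero))

/-- The ratio `ρ = ḡ' / g'`, i.e. `sin (θ - α) / sin θ` when `f' = cos θ` and `g' = sin θ`. -/
noncomputable def rotRatio (f g : ℝ → ℝ) (α x : ℝ) : ℝ :=
  (cos α * deriv g x - sin α * deriv f x) / deriv g x

section Rotation

variable {f g : ℝ → ℝ} (hf : ContDiff ℝ 2 f) (hg : ContDiff ℝ 2 g) (α : ℝ)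
include hf hg

theorem deriv_rotate_add :
    deriv (fun s => cos α * f s + sin α * g s) =
      fun s => cos α * deriv f s + sin α * deriv g s := by
  funext s
  exact (((hf.differentiable two_ne_zero s).hasDerivAt.const_mul _).add
    ((hg.differentiable two_ne_zero s).hasDerivAt.const_mul _)).deriv

theorem deriv_rotate_sub :
    deriv (fun s => cos α * g s - sin α * f s) =
      fun s => cos α * deriv g s - sin α * deriv f s := by
  funext s
  exact (((hg.differentiable two_ne_zero s).hasDerivAt.const_mul _).sub
    ((hf.differentiable two_ne_zero s).hasDerivAt.const_mul _)).deriv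

theorem deriv_deriv_rotate_add (s : ℝ) :
    deriv (deriv (fun s => cos α * f s + sin α * g s)) s =
      cos α * deriv (deriv f) s + sin α * deriv (deriv g) s := by
  rw [deriv_rotate_add hf hg]
  exact (((hf.differentiable_deriv_two s).hasDerivAt.const_mul _).add
    ((hg.differentiable_deriv_two s).hasDerivAt.const_mul _)).deriv

theorem rotRatio_sq_add_eq {t u x : ℝ} (ht : t ^ 2 < 1) (hu : u ^ 2 < 1) (hu₀ : u ≠ 0)
    (hunit : ∀ᶠ y in 𝓝 x, deriv f y ^ 2 + deriv g y ^ 2 = 1) (hB : deriv g x ≠ 0)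
    (hA' : deriv (deriv f) x ≠ 0)
    (hκ : ‖deriv (deriv (Tdeform f g t)) x‖ =
      ‖deriv (deriv (Tdeform (fun s => cos α * f s + sin α * g s)
        (fun s => cos α * g s - sin α * f s) u)) x‖) :
    rotRatio f g α x ^ 2 + t ^ 2 *
        ((cos α * deriv f x + sin α * deriv g x) ^ 2 - rotRatio f g α x ^ 2 * deriv f x ^ 2) =
      t ^ 2 / u ^ 2 := by
  have hunit_rot : ∀ᶠ y in 𝓝 x, deriv (fun s => cos α * f s + sin α * g s) y ^ 2 +
      deriv (fun s => cos α * g s - sin α * f s) y ^ 2 = 1 := by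
    filter_upwards [hunit] with y hy
    rw [deriv_rotate_add hf hg, deriv_rotate_sub hf hg]
    linear_combination hy + (deriv f y ^ 2 + deriv g y ^ 2) * (sin_sq_add_cos_sq α)
  have hκ_sq := congrArg (· ^ 2) hκ
  rw [norm_deriv_deriv_Tdeform_sq hf hg ht hunit,
    norm_deriv_deriv_Tdeform_sq (by fun_prop) (by fun_prop) hu hunit_rot,
    deriv_deriv_rotate_add hf hg, deriv_rotate_add hf hg] at hκ_sq
  have hortho := mul_deriv_add_mul_deriv_eq_zero (hf.differentiable_deriv_two x)
    (hg.differentiable_deriv_two x) hunit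
  have hden : 0 < 1 - t ^ 2 * deriv f x ^ 2 := by
    nlinarith [hunit.self_of_nhds, sq_nonneg (deriv g x), sq_nonneg (deriv f x)]
  have hden_rot : 0 < 1 - u ^ 2 * (cos α * deriv f x + sin α * deriv g x) ^ 2 := by
    have h := hunit_rot.self_of_nhds
    rw [deriv_rotate_add hf hg, deriv_rotate_sub hf hg] at h
    nlinarith [sq_nonneg (cos α * deriv g x - sin α * deriv f x),
      sq_nonneg (cos α * deriv f x + sin α * deriv g x)]
  have hM : cos α * deriv (deriv f) x + sin α * deriv (deriv g) x =
      deriv (deriv f) x * rotRatio f g α x := by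
    unfold rotRatio
    field_simp
    linear_combination sin α * hortho
  rw [hM, div_eq_div_iff hden.ne' hden_rot.ne'] at hκ_sq
  field_simp
  apply mul_left_cancel₀ (pow_ne_zero 2 hA')
  linear_combination -hκ_sq

theorem hasDerivAt_rotRatio {x : ℝ} (hunit : ∀ᶠ y in 𝓝 x, deriv f y ^ 2 + deriv g y ^ 2 = 1)
    (hB : deriv g x ≠ 0) :
    HasDerivAt (rotRatio f g α) (-(sin α * deriv (deriv f) x) / deriv g x ^ 3) x := by
  have hA := (hf.differentiable_deriv_two x).hasDerivAt
  have hB' := (hg.differentiable_deriv_two x).hasDerivAt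
  have hortho := mul_deriv_add_mul_deriv_eq_zero hA.differentiableAt hB'.differentiableAt hunit
  refine (((hB'.const_mul (cos α)).sub (hA.const_mul (sin α))).fun_div hB' hB).congr_deriv ?_
  simp only [Pi.sub_apply]
  field_simp
  linear_combination -(sin α * deriv (deriv f) x) * hunit.self_of_nhds +
    sin α * deriv f x * hortho

theorem deriv_deriv_eq_zero_of_norm_deriv_deriv_Tdeform_eq {S T : Set ℝ} (hS : IsOpen S)
    (hunit : ∀ x ∈ S, deriv f x ^ 2 + deriv g x ^ 2 = 1) (hB : ∀ x ∈ S, deriv g x ≠ 0)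
    (hα : sin α ≠ 0) (hT : IsOpen T) (hTne : T.Nonempty) (hTsub : T ⊆ Ioo 0 1)
    (hcurv : ∀ t ∈ T, ∃ u ∈ Ioo (0 : ℝ) 1, ∀ x ∈ S,
      ‖deriv (deriv (Tdeform f g t)) x‖ =
        ‖deriv (deriv (Tdeform (fun s => cos α * f s + sin α * g s)
          (fun s => cos α * g s - sin α * f s) u)) x‖) :
    ∀ x ∈ S, deriv (deriv f) x = 0 := by
  set U := S ∩ {x | deriv (deriv f) x ≠ 0}
  have hU : IsOpen U :=
    hS.inter (isOpen_ne_fun ((hf.deriv' (n := 1)).continuous_deriv le_rfl) continuous_const)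
  have hunit_nhds : ∀ x ∈ S, ∀ᶠ y in 𝓝 x, deriv f y ^ 2 + deriv g y ^ 2 = 1 :=
    fun x hx => eventually_of_mem (hS.mem_nhds hx) hunit
  have hrel : ∀ t ∈ T, ∃ c, ∀ x ∈ U, rotRatio f g α x ^ 2 + t ^ 2 *
      ((cos α * deriv f x + sin α * deriv g x) ^ 2 - rotRatio f g α x ^ 2 * deriv f x ^ 2) = c := by
    intro t ht
    obtain ⟨u, hu, hκ⟩ := hcurv t ht
    have ht' := hTsub ht
    exact ⟨t ^ 2 / u ^ 2, fun x hx => rotRatio_sq_add_eq hf hg α (by nlinarith [ht'.1, ht'.2])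
      (by nlinarith [hu.1, hu.2]) hu.1.ne' (hunit_nhds x hx.1) (hB x hx.1) hx.2 (hκ x hx.1)⟩
  obtain ⟨t₁, ht₁, t₂, ht₂, hne⟩ :=
    (infinite_of_mem_nhds _ (hT.mem_nhds hTne.some_mem)).nontrivial
  have hsq : t₂ ^ 2 - t₁ ^ 2 ≠ 0 := sub_ne_zero.2 fun h =>
    hne ((pow_left_inj₀ (hTsub ht₁).1.le (hTsub ht₂).1.le two_ne_zero).1 h.symm)
  obtain ⟨c₁, hc₁⟩ := hrel t₁ ht₁
  obtain ⟨c₂, hc₂⟩ := hrel t₂ ht₂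
  have hconst : ∀ x ∈ U,
      rotRatio f g α x ^ 2 = (t₂ ^ 2 * c₁ - t₁ ^ 2 * c₂) / (t₂ ^ 2 - t₁ ^ 2) := fun x hx => by
    rw [eq_div_iff hsq]
    linear_combination t₂ ^ 2 * hc₁ x hx - t₁ ^ 2 * hc₂ x hx
  have hU_empty := hU.eq_empty_of_sq_const_of_hasDerivAt_ne_zero
    (fun x hx => hasDerivAt_rotRatio hf hg α (hunit_nhds x hx.1) (hB x hx.1))
    (fun x hx => div_ne_zero (neg_ne_zero.2 (mul_ne_zero hα hx.2)) (pow_ne_zero 3 (hB x hx.1)))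
    hconst
  intro x hx
  by_contra hx'
  exact hU_empty.subset ⟨hx, hx'⟩

end Rotation

theorem zip_row_profile_is_straight_general (k : ℝ) (f g : ℝ → ℝ)
    (hf : ContDiff ℝ 2 f) (hg : ContDiff ℝ 2 g)
    (hunit : ∀ s ∈ Set.Icc (0 : ℝ) k, deriv f s ^ 2 + deriv g s ^ 2 = 1)
    (hg' : ∀ s ∈ Set.Icc (0 : ℝ) k, deriv g s ≠ 0)
    (α : ℝ) (hα : Real.sin α ≠ 0)
    (T : Set ℝ) (hT : IsOpen T) (hTne : T.Nonempty) (hTsub : T ⊆ Set.Ioo 0 1)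
    (hcurv : ∀ t ∈ T, ∃ th ∈ Set.Ioo (0 : ℝ) 1, ∀ s ∈ Set.Icc (0 : ℝ) k,
      ‖deriv (deriv (Tdeform f g t)) s‖ =
        ‖deriv (deriv (Tdeform
            (fun s => Real.cos α * f s + Real.sin α * g s)
            (fun s => Real.cos α * g s - Real.sin α * f s) th)) s‖) :
    ∃ a b c d : ℝ, ∀ s ∈ Set.Icc (0 : ℝ) k,
      f s = a * s + b ∧ g s = c * s + d := by
  have hunit' : ∀ x ∈ Ioo 0 k, deriv f x ^ 2 + deriv g x ^ 2 = 1 :=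
    fun x hx => hunit x (Ioo_subset_Icc_self hx)
  have hf'' := deriv_deriv_eq_zero_of_norm_deriv_deriv_Tdeform_eq hf hg α isOpen_Ioo hunit'
    (fun x hx => hg' x (Ioo_subset_Icc_self hx)) hα hT hTne hTsub
    fun t ht => (hcurv t ht).imp fun _ ⟨hu, hκ⟩ => ⟨hu, fun x hx => hκ x (Ioo_subset_Icc_self hx)⟩
  have hg'' : ∀ x ∈ Ioo 0 k, deriv (deriv g) x = 0 := fun x hx => by
    have hortho := mul_deriv_add_mul_deriv_eq_zero (hf.differentiable_deriv_two x)
      (hg.differentiable_deriv_two x) (eventually_of_mem (isOpen_Ioo.mem_nhds hx) hunit')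
    rw [hf'' x hx, mul_zero, zero_add] at hortho
    exact (mul_eq_zero.1 hortho).resolve_left (hg' x (Ioo_subset_Icc_self hx))
  obtain ⟨a, b, hab⟩ := exists_affine_of_deriv_deriv_eq_zero hf hf''
  obtain ⟨c, d, hcd⟩ := exists_affine_of_deriv_deriv_eq_zero hg hg''
  exact ⟨a, b, c, d, fun s hs => ⟨hab s hs, hcd s hs⟩⟩

/-- Analytic core of Theorem 4 (thm:profil): if for an open set of deformation
parameters `t` the T-deformation of the profile and the T-deformation of the
profile rotated by an angle `α` (with `sin α ≠ 0`) have identical curvature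
functions (for a suitable parameter `t̂`), then the profile curve is a straight
line segment, i.e. `f` and `g` are affine on `[0, k]`. -/
theorem zip_row_profile_is_straight (k : ℝ) (hk : 0 < k) (f g : ℝ → ℝ)
    (hf : ContDiff ℝ 2 f) (hg : ContDiff ℝ 2 g)
    (hunit : ∀ s ∈ Set.Icc (0 : ℝ) k, deriv f s ^ 2 + deriv g s ^ 2 = 1)
    (hg' : ∀ s ∈ Set.Icc (0 : ℝ) k, deriv g s ≠ 0)
    (α : ℝ) (hα : Real.sin α ≠ 0)
    (T : Set ℝ) (hT : IsOpen T) (hTne : T.Nonempty) (hTsub : T ⊆ Set.Ioo 0 1)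
    (hcurv : ∀ t ∈ T, ∃ th ∈ Set.Ioo (0 : ℝ) 1, ∀ s ∈ Set.Icc (0 : ℝ) k,
      ‖deriv (deriv (Tdeform f g t)) s‖ =
        ‖deriv (deriv (Tdeform
            (fun s => Real.cos α * f s + Real.sin α * g s)
            (fun s => Real.cos α * g s - Real.sin α * f s) th)) s‖) :
    ∃ a b c d : ℝ, ∀ s ∈ Set.Icc (0 : ℝ) k,
      f s = a * s + b ∧ g s = c * s + d :=
  zip_row_profile_is_straight_general k f g hf hg hunit hg' α hα T hT hTne hTsub hcurv
end

section
/- Let k > 0 and let f, g : [0, k] → ℝ be continuously differentiable with f'(s)² + g'(s)² = 1 for all s. Consider the cylinder {(f(s), g(s), u) : s ∈ [0, k], u ∈ ℝ} with ruling direction (0, 0, 1), and for t ∈ (0, 1] the T-type deformation Φ_t(s, u) = (t·f(s), z_t(s), u), where z_t(s) = ∫₀ˢ √((1−t²)·f'(v)² + g'(v)²) dv. Then for arbitrary λ, d ∈ ℝ, the planar cut of the cylinder by the plane {(x, y, u) : u = λ·x + d} is the curve s ↦ (f(s), g(s), λ·f(s) + d), and its image under Φ_t, namely s ↦ (t·f(s),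 z_t(s), λ·f(s) + d), lies entirely in the plane {(x, y, u) : t·u = λ·x + t·d}. In particular, for any two planes of the form u = λ₁·x + d₁ and u = λ₂·x + d₂ (whose intersection line is orthogonal to the ruling direction), both planar cuts remain planar during the whole deformation, as do the cuts by all planes of the pencil they span. -/
/-- Existence half of item 1 of Theorem 5 (thm:results), cylindrical case:
under the T-type deformation `Φ_t (s, u) = (t·f s, z_t s, u)` of the cylinder
over the unit-speed profile `s ↦ (f s, g s)` with rulings in direction
`(0,0,1)`, the planar cut by any plane `u = λ·x + d` (whose intersection line
with any other such plane is orthogonal to the ruling direction) is the curve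
`s ↦ (f s, g s, λ·f s + d)`, and its deformed image
`s ↦ (t·f s, z_t s, λ·f s + d)` lies in the plane `t·u = λ·x + t·d`;
so all such planar cuts remain planar during the whole deformation. -/
theorem cylinder_planar_cuts_remain_planar (k : ℝ) (hk : 0 < k)
    (f g f' g' : ℝ → ℝ)
    (hf : ∀ s ∈ Set.Icc (0 : ℝ) k, HasDerivWithinAt f (f' s) (Set.Icc 0 k) s)
    (hg : ∀ s ∈ Set.Icc (0 : ℝ) k, HasDerivWithinAt g (g' s) (Set.Icc 0 k) s)
    (hf'c : ContinuousOn f' (Set.Icc 0 k)) (hg'c : ContinuousOn g' (Set.Icc 0 k))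
    (hunit : ∀ s ∈ Set.Icc (0 : ℝ) k, f' s ^ 2 + g' s ^ 2 = 1)
    (cyl : Set (ℝ × ℝ × ℝ))
    (hcyl : cyl = {p | ∃ s ∈ Set.Icc (0 : ℝ) k, ∃ u : ℝ, p = (f s, g s, u)})
    (t : ℝ) (ht : t ∈ Set.Ioc (0 : ℝ) 1)
    (zt : ℝ → ℝ)
    (hzt : ∀ s, zt s =
      ∫ u in (0 : ℝ)..s, Real.sqrt ((1 - t ^ 2) * f' u ^ 2 + g' u ^ 2)) :
    ∀ lam d : ℝ,
      ({p ∈ cyl | p.2.2 = lam * p.1 + d}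
          = (fun s => (f s, g s, lam * f s + d)) '' Set.Icc (0 : ℝ) k) ∧
      (∀ s ∈ Set.Icc (0 : ℝ) k,
        ((t * f s, zt s, lam * f s + d) : ℝ × ℝ × ℝ) ∈
          {p : ℝ × ℝ × ℝ | t * p.2.2 = lam * p.1 + t * d}) := by
  intro lam d
  constructor
  · subst hcyl
    ext p
    constructor
    · rintro ⟨⟨s, hs, u, rfl⟩, hp⟩
      exact ⟨s, hs, by simp_all⟩
    · rintro ⟨s, hs, rfl⟩
      exact ⟨⟨s, hs, lam * f s + d, rfl⟩, rfl⟩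
  · intro s hs
    simp only [Set.mem_setOf_eq]
    ring
end

section
/- Let k > 0 and let f, g : [0, k] → ℝ be twice continuously differentiable with f'(s)² + g'(s)² = 1 and g'(s) ≠ 0 for all s ∈ [0, k]. Let α ∈ ℝ and set f̄ = cos α·f + sin α·g, ḡ = cos α·g − sin α·f. Fix t, t̂ ∈ (−1, 1) and let p_t and p̄_{t̂} be the T-deformed curves of (f, g) and (f̄, ḡ), respectively. Define D(s) = (1−t²)·f'(s)² + g'(s)², D̂(s) = (1−t̂²)·f̄'(s)² + ḡ'(s)², K₁(s) = f'(s)·g''(s) − f''(s)·g'(s), and K₂(s) = t̂²·(t²−1)·(sin α·f'(s) − cos α·g'(s))² + t²·(1−t̂²)·g'(s)². Then for all s ∈ [0, k]: (‖p_t''(s)‖² − ‖p̄_{t̂}''(s)‖²)·D(s)·D̂(s) = K₁(s)²·K₂(s). In particular, the curvature functions of p_t and p̄_{t̂} coincide on [0, k] if and only if K₁(s)²·K₂(s) = 0 for all s ∈ [0, k]. -/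
open Set

theorem hasDerivAt_toLp_prod {u v : ℝ → ℝ} {u' v' x : ℝ} (hu : HasDerivAt u u' x)
    (hv : HasDerivAt v v' x) :
    HasDerivAt (fun s => WithLp.toLp 2 (u s, v s)) (WithLp.toLp 2 (u', v')) x :=
  (WithLp.prodContinuousLinearEquiv 2 ℝ ℝ ℝ).symm.hasFDerivAt.comp_hasDerivAt x (hu.prodMk hv)

section Tdeform

variable {f g : ℝ → ℝ} {t : ℝ}

theorem hasDerivAt_tdeform {x : ℝ} (hf : DifferentiableAt ℝ f x) (hf' : Continuous (deriv f))
    (hg' : Continuous (deriv g)) :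
    HasDerivAt (Tdeform f g t)
      (WithLp.toLp 2 (t * deriv f x, √((1 - t ^ 2) * deriv f x ^ 2 + deriv g x ^ 2))) x :=
  hasDerivAt_toLp_prod (hf.hasDerivAt.const_mul t)
    ((by fun_prop : Continuous fun u => √((1 - t ^ 2) * deriv f u ^ 2 + deriv g u ^ 2)
      ).integral_hasStrictDerivAt 0 x).hasDerivAt

theorem deriv_tdeform (hf : ContDiff ℝ 2 f) (hg : ContDiff ℝ 2 g) :
    deriv (Tdeform f g t) = fun x =>
      WithLp.toLp 2 (t * deriv f x, √((1 - t ^ 2) * deriv f x ^ 2 + deriv g x ^ 2)) :=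
  funext fun x => (hasDerivAt_tdeform (hf.differentiable (by norm_num) x)
    (hf.continuous_deriv (by norm_num)) (hg.continuous_deriv (by norm_num))).deriv

theorem hasDerivAt_deriv_tdeform (hf : ContDiff ℝ 2 f) (hg : ContDiff ℝ 2 g) {s : ℝ}
    (hD : 0 < (1 - t ^ 2) * deriv f s ^ 2 + deriv g s ^ 2) :
    HasDerivAt (deriv (Tdeform f g t))
      (WithLp.toLp 2 (t * deriv (deriv f) s,
        ((1 - t ^ 2) * deriv f s * deriv (deriv f) s + deriv g s * deriv (deriv g) s)
          / √((1 - t ^ 2) * deriv f s ^ 2 + deriv g s ^ 2))) s := by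
  have hf'' := hf.differentiable_deriv_two s |>.hasDerivAt
  have hg'' := hg.differentiable_deriv_two s |>.hasDerivAt
  rw [deriv_tdeform hf hg]
  refine hasDerivAt_toLp_prod (hf''.const_mul t) ?_
  have hD' : HasDerivAt (fun u => (1 - t ^ 2) * deriv f u ^ 2 + deriv g u ^ 2)
      (2 * ((1 - t ^ 2) * deriv f s * deriv (deriv f) s + deriv g s * deriv (deriv g) s)) s :=
    (((hf''.pow 2).const_mul _).add (hg''.pow 2)).congr_deriv (by ring)
  exact (hD'.sqrt hD.ne').congr_deriv (by field_simp)

theorem norm_sq_deriv_deriv_tdeform_mul (hf : ContDiff ℝ 2 f) (hg : ContDiff ℝ 2 g) {s : ℝ}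
    (hD : 0 < (1 - t ^ 2) * deriv f s ^ 2 + deriv g s ^ 2) :
    ‖deriv (deriv (Tdeform f g t)) s‖ ^ 2 * ((1 - t ^ 2) * deriv f s ^ 2 + deriv g s ^ 2)
      = t ^ 2 * deriv (deriv f) s ^ 2 * ((1 - t ^ 2) * deriv f s ^ 2 + deriv g s ^ 2)
        + ((1 - t ^ 2) * deriv f s * deriv (deriv f) s + deriv g s * deriv (deriv g) s) ^ 2 := by
  rw [(hasDerivAt_deriv_tdeform hf hg hD).deriv, WithLp.prod_norm_sq_eq_of_L2]
  simp only [WithLp.toLp_fst, WithLp.toLp_snd, Real.norm_eq_abs, sq_abs, div_pow,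
    Real.sq_sqrt hD.le]
  field_simp

end Tdeform

theorem mul_deriv_add_mul_deriv_eq_zero_of_sq_add_sq_eq_one {u v : ℝ → ℝ} {k s : ℝ}
    (hk : 0 < k) (hs : s ∈ Icc 0 k) (hu : DifferentiableAt ℝ u s) (hv : DifferentiableAt ℝ v s)
    (huv : ∀ x ∈ Icc 0 k, u x ^ 2 + v x ^ 2 = 1) :
    u s * deriv u s + v s * deriv v s = 0 := by
  have hsum : HasDerivWithinAt (fun x => u x ^ 2 + v x ^ 2)
      (2 * (u s * deriv u s + v s * deriv v s)) (Icc 0 k) s :=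
    ((hu.hasDerivAt.pow 2).add (hv.hasDerivAt.pow 2)).hasDerivWithinAt.congr_deriv (by ring)
  have hconst : HasDerivWithinAt (fun x => u x ^ 2 + v x ^ 2) 0 (Icc 0 k) s :=
    (hasDerivWithinAt_const s _ 1).congr huv (huv s hs)
  linarith [(uniqueDiffOn_Icc hk s hs).eq_deriv _ hsum hconst]

theorem eq_iff_eq_zero_of_sq_sub_sq_mul_mul_eq {x y c d r : ℝ} (hx : 0 ≤ x) (hy : 0 ≤ y)
    (hc : c ≠ 0) (hd : d ≠ 0) (h : (x ^ 2 - y ^ 2) * c * d = r) : x = y ↔ r = 0 := by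
  rw [← h, mul_eq_zero, mul_eq_zero, sub_eq_zero, pow_left_inj₀ hx hy two_ne_zero]
  simp [hc, hd]

noncomputable def profileCurvature (f g : ℝ → ℝ) (s : ℝ) : ℝ :=
  deriv f s * deriv (deriv g) s - deriv (deriv f) s * deriv g s

section UnitSpeed

variable {f g : ℝ → ℝ} {k s : ℝ}

theorem frenet_of_unit_speed (hk : 0 < k) (hs : s ∈ Icc 0 k) (hf : ContDiff ℝ 2 f)
    (hg : ContDiff ℝ 2 g) (hunit : ∀ x ∈ Icc 0 k, deriv f x ^ 2 + deriv g x ^ 2 = 1) :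
    deriv (deriv f) s = -(profileCurvature f g s * deriv g s) ∧
      deriv (deriv g) s = profileCurvature f g s * deriv f s := by
  have horth := mul_deriv_add_mul_deriv_eq_zero_of_sq_add_sq_eq_one hk hs
    (hf.differentiable_deriv_two s) (hg.differentiable_deriv_two s) hunit
  have hunit_s := hunit s hs
  unfold profileCurvature
  constructor
  · linear_combination deriv f s * horth - deriv (deriv f) s * hunit_s
  · linear_combination deriv g s * horth - deriv (deriv g) s * hunit_s

theorem tdeform_speed_sq_pos {a b t : ℝ} (hab : a ^ 2 + b ^ 2 = 1) (ht : t ^ 2 < 1) :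
    0 < (1 - t ^ 2) * a ^ 2 + b ^ 2 := by
  nlinarith [sq_nonneg a, sq_nonneg (t * b)]

theorem norm_sq_deriv_deriv_tdeform_mul_of_unit_speed {t : ℝ} (hk : 0 < k) (hs : s ∈ Icc 0 k)
    (hf : ContDiff ℝ 2 f) (hg : ContDiff ℝ 2 g)
    (hunit : ∀ x ∈ Icc 0 k, deriv f x ^ 2 + deriv g x ^ 2 = 1) (ht : t ^ 2 < 1) :
    ‖deriv (deriv (Tdeform f g t)) s‖ ^ 2 * ((1 - t ^ 2) * deriv f s ^ 2 + deriv g s ^ 2)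
      = t ^ 2 * profileCurvature f g s ^ 2 * deriv g s ^ 2 := by
  obtain ⟨hf'', hg''⟩ := frenet_of_unit_speed hk hs hf hg hunit
  rw [norm_sq_deriv_deriv_tdeform_mul hf hg (tdeform_speed_sq_pos (hunit s hs) ht), hf'', hg'']
  linear_combination t ^ 2 * profileCurvature f g s ^ 2 * deriv g s ^ 2 * hunit s hs

end UnitSpeed

section Rotation

variable {f g : ℝ → ℝ} (α : ℝ)

theorem deriv_rotate_fst (hf : Differentiable ℝ f) (hg : Differentiable ℝ g) :
    deriv (fun s => Real.cos α * f s + Real.sin α * g s)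
      = fun s => Real.cos α * deriv f s + Real.sin α * deriv g s :=
  funext fun s => (((hf s).hasDerivAt.const_mul _).add ((hg s).hasDerivAt.const_mul _)).deriv

theorem deriv_rotate_snd (hf : Differentiable ℝ f) (hg : Differentiable ℝ g) :
    deriv (fun s => Real.cos α * g s - Real.sin α * f s)
      = fun s => Real.cos α * deriv g s - Real.sin α * deriv f s :=
  funext fun s => (((hg s).hasDerivAt.const_mul _).sub ((hf s).hasDerivAt.const_mul _)).deriv

theorem unit_speed_rotate {k : ℝ} (hunit : ∀ x ∈ Icc 0 k, deriv f x ^ 2 + deriv g x ^ 2 = 1)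
    (hf : Differentiable ℝ f) (hg : Differentiable ℝ g) :
    ∀ x ∈ Icc 0 k, deriv (fun s => Real.cos α * f s + Real.sin α * g s) x ^ 2
      + deriv (fun s => Real.cos α * g s - Real.sin α * f s) x ^ 2 = 1 := by
  intro x hx
  rw [deriv_rotate_fst α hf hg, deriv_rotate_snd α hf hg]
  linear_combination (deriv f x ^ 2 + deriv g x ^ 2) * Real.cos_sq_add_sin_sq α + hunit x hx

theorem profileCurvature_rotate (hf : ContDiff ℝ 2 f) (hg : ContDiff ℝ 2 g) (s : ℝ) :
    profileCurvature (fun s => Real.cos α * f s + Real.sin α * g s)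
      (fun s => Real.cos α * g s - Real.sin α * f s) s = profileCurvature f g s := by
  have hf' := hf.differentiable (by norm_num)
  have hg' := hg.differentiable (by norm_num)
  unfold profileCurvature
  rw [deriv_rotate_fst α hf' hg', deriv_rotate_snd α hf' hg',
    deriv_rotate_fst α hf.differentiable_deriv_two hg.differentiable_deriv_two,
    deriv_rotate_snd α hf.differentiable_deriv_two hg.differentiable_deriv_two]
  linear_combination (deriv f s * deriv (deriv g) s - deriv (deriv f) s * deriv g s)
    * Real.cos_sq_add_sin_sq α

end Rotation

theorem curvature_difference_factorization_general (k : ℝ) (hk : 0 < k) (f g : ℝ → ℝ)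
    (hf : ContDiff ℝ 2 f) (hg : ContDiff ℝ 2 g)
    (hunit : ∀ s ∈ Set.Icc (0 : ℝ) k, deriv f s ^ 2 + deriv g s ^ 2 = 1)
    (α t th : ℝ) (ht : t ∈ Set.Ioo (-1 : ℝ) 1) (hth : th ∈ Set.Ioo (-1 : ℝ) 1)
    (fb gb : ℝ → ℝ)
    (hfb : fb = fun s => Real.cos α * f s + Real.sin α * g s)
    (hgb : gb = fun s => Real.cos α * g s - Real.sin α * f s)
    (D Dh K₁ K₂ : ℝ → ℝ)
    (hD : ∀ s, D s = (1 - t ^ 2) * deriv f s ^ 2 + deriv g s ^ 2)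
    (hDh : ∀ s, Dh s = (1 - th ^ 2) * deriv fb s ^ 2 + deriv gb s ^ 2)
    (hK₁ : ∀ s, K₁ s =
      deriv f s * deriv (deriv g) s - deriv (deriv f) s * deriv g s)
    (hK₂ : ∀ s, K₂ s =
      th ^ 2 * (t ^ 2 - 1) * (Real.sin α * deriv f s - Real.cos α * deriv g s) ^ 2
        + t ^ 2 * (1 - th ^ 2) * deriv g s ^ 2) :
    (∀ s ∈ Set.Icc (0 : ℝ) k,
      (‖deriv (deriv (Tdeform f g t)) s‖ ^ 2
          - ‖deriv (deriv (Tdeform fb gb th)) s‖ ^ 2) * D s * Dh s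
        = K₁ s ^ 2 * K₂ s) ∧
    ((∀ s ∈ Set.Icc (0 : ℝ) k,
        ‖deriv (deriv (Tdeform f g t)) s‖ = ‖deriv (deriv (Tdeform fb gb th)) s‖)
      ↔ (∀ s ∈ Set.Icc (0 : ℝ) k, K₁ s ^ 2 * K₂ s = 0)) := by
  have ht2 : t ^ 2 < 1 := (sq_lt_one_iff_abs_lt_one _).2 (abs_lt.2 ht)
  have hth2 : th ^ 2 < 1 := (sq_lt_one_iff_abs_lt_one _).2 (abs_lt.2 hth)
  have hf_diff := hf.differentiable (by norm_num)
  have hg_diff := hg.differentiable (by norm_num)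
  have hfb_smooth : ContDiff ℝ 2 fb := hfb ▸ by fun_prop
  have hgb_smooth : ContDiff ℝ 2 gb := hgb ▸ by fun_prop
  have hunitb : ∀ x ∈ Icc 0 k, deriv fb x ^ 2 + deriv gb x ^ 2 = 1 := by
    subst hfb hgb; exact unit_speed_rotate α hunit hf_diff hg_diff
  have key s (hs : s ∈ Icc 0 k) : (‖deriv (deriv (Tdeform f g t)) s‖ ^ 2
      - ‖deriv (deriv (Tdeform fb gb th)) s‖ ^ 2) * D s * Dh s = K₁ s ^ 2 * K₂ s := by
    have hκ : profileCurvature f g s = K₁ s := (hK₁ s).symm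
    have hκb : profileCurvature fb gb s = K₁ s := by
      subst hfb hgb; rw [profileCurvature_rotate α hf hg, hκ]
    have hgb_s : deriv gb s = Real.cos α * deriv g s - Real.sin α * deriv f s := by
      rw [hgb, deriv_rotate_snd α hf_diff hg_diff]
    have e := hκ ▸ norm_sq_deriv_deriv_tdeform_mul_of_unit_speed hk hs hf hg hunit ht2
    have eb := hκb ▸
      norm_sq_deriv_deriv_tdeform_mul_of_unit_speed hk hs hfb_smooth hgb_smooth hunitb hth2
    rw [hD, hDh, hK₂]
    linear_combination ((1 - th ^ 2) * deriv fb s ^ 2 + deriv gb s ^ 2) * e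
      - ((1 - t ^ 2) * deriv f s ^ 2 + deriv g s ^ 2) * eb
      + K₁ s ^ 2 * t ^ 2 * deriv g s ^ 2 * (1 - th ^ 2) * hunitb s hs
      - K₁ s ^ 2 * th ^ 2 * deriv gb s ^ 2 * (1 - t ^ 2) * hunit s hs
      + K₁ s ^ 2 * th ^ 2 * (t ^ 2 - 1) * (deriv gb s + Real.cos α * deriv g s
        - Real.sin α * deriv f s) * hgb_s
  refine ⟨key, forall₂_congr fun s hs => ?_⟩
  have hD_pos : 0 < D s := hD s ▸ tdeform_speed_sq_pos (hunit s hs) ht2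
  have hDh_pos : 0 < Dh s := hDh s ▸ tdeform_speed_sq_pos (hunitb s hs) hth2
  exact eq_iff_eq_zero_of_sq_sub_sq_mul_mul_eq (norm_nonneg _) (norm_nonneg _) hD_pos.ne'
    hDh_pos.ne' (key s hs)

/-- The 'straightforward computation' in the proof of Theorem 4 (thm:profil):
comparing the squared curvatures of the T-deformation of a unit-speed profile
and of its rotation by `α` yields the factorization `K₁² · K₂`; in particular
the curvature functions coincide iff `K₁²·K₂` vanishes identically. -/
theorem curvature_difference_factorization (k : ℝ) (hk : 0 < k) (f g : ℝ → ℝ)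
    (hf : ContDiff ℝ 2 f) (hg : ContDiff ℝ 2 g)
    (hunit : ∀ s ∈ Set.Icc (0 : ℝ) k, deriv f s ^ 2 + deriv g s ^ 2 = 1)
    (hg' : ∀ s ∈ Set.Icc (0 : ℝ) k, deriv g s ≠ 0)
    (α t th : ℝ) (ht : t ∈ Set.Ioo (-1 : ℝ) 1) (hth : th ∈ Set.Ioo (-1 : ℝ) 1)
    (fb gb : ℝ → ℝ)
    (hfb : fb = fun s => Real.cos α * f s + Real.sin α * g s)
    (hgb : gb = fun s => Real.cos α * g s - Real.sin α * f s)
    (D Dh K₁ K₂ : ℝ → ℝ)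
    (hD : ∀ s, D s = (1 - t ^ 2) * deriv f s ^ 2 + deriv g s ^ 2)
    (hDh : ∀ s, Dh s = (1 - th ^ 2) * deriv fb s ^ 2 + deriv gb s ^ 2)
    (hK₁ : ∀ s, K₁ s =
      deriv f s * deriv (deriv g) s - deriv (deriv f) s * deriv g s)
    (hK₂ : ∀ s, K₂ s =
      th ^ 2 * (t ^ 2 - 1) * (Real.sin α * deriv f s - Real.cos α * deriv g s) ^ 2
        + t ^ 2 * (1 - th ^ 2) * deriv g s ^ 2) :
    (∀ s ∈ Set.Icc (0 : ℝ) k,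
      (‖deriv (deriv (Tdeform f g t)) s‖ ^ 2
          - ‖deriv (deriv (Tdeform fb gb th)) s‖ ^ 2) * D s * Dh s
        = K₁ s ^ 2 * K₂ s) ∧
    ((∀ s ∈ Set.Icc (0 : ℝ) k,
        ‖deriv (deriv (Tdeform f g t)) s‖ = ‖deriv (deriv (Tdeform fb gb th)) s‖)
      ↔ (∀ s ∈ Set.Icc (0 : ℝ) k, K₁ s ^ 2 * K₂ s = 0)) :=
  curvature_difference_factorization_general k hk f g hf hg hunit α t th ht hth fb gb hfb hgb D Dh
    K₁ K₂ hD hDh hK₁ hK₂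
end
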